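/- arXiv:2307.07374 — 3 statements merged into one kernel-verified Lean document; each statement's English description precedes it below -/
import Mathlib

section
/- Define y(p) = min{w/p, inf{x ∈ [0,1] : V'(x)·(1−x) ≤ p·C'(p·x)}} for p > 0 (and y(0) = 1), where V is differentiable, concave, weakly increasing with V(0)=0, C is differentiable, convex, weakly increasing with C(0)=0, and w > 0. Then y is weakly decreasing in p. -/
/-! Raising the price `p` can only enlarge the set `{x ∈ [0,1] : V'(x)(1 - x) ≤ p C'(px)}`,
because `C'` is nonnegative and monotone, so `p ↦ p C'(px)` is monotone for `x ≥ 0`; hence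
its infimum decreases, and so does `w / p`. The value `y 0 = 1` fits since `1` always lies
in the set. -/

open Set

lemma mul_comp_mul_le_mul_comp_mul {R : Type*} [Semiring R] [PartialOrder R]
    [IsOrderedRing R] {g : R → R} (hg : Monotone g) (hg0 : ∀ x, 0 ≤ g x)
    {p p' x : R} (hp : 0 ≤ p) (hpp' : p ≤ p') (hx : 0 ≤ x) :
    p * g (p * x) ≤ p' * g (p' * x) :=
  mul_le_mul hpp' (hg (mul_le_mul_of_nonneg_right hpp' hx)) (hg0 _) (hp.trans hpp')

lemma AntitoneOn.Ici_of_Ioi {α β : Type*} [LinearOrder α] [Preorder β] {f : α → β} {a : α}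
    (hf : AntitoneOn f (Ioi a)) (ha : ∀ p > a, f p ≤ f a) : AntitoneOn f (Ici a) := by
  intro p hp q hq hpq
  rcases (mem_Ici.mp hp).eq_or_lt with rfl | hap
  · rcases (mem_Ici.mp hq).eq_or_lt with rfl | haq
    · rfl
    · exact ha q haq
  · exact hf hap (hap.trans_le hpq) hpq

/-- The set whose infimum defines the minimal stable allocation, with `a x = V'(x)(1 - x)` and
`g = C'`. -/
def stableSet (a g : ℝ → ℝ) (p : ℝ) : Set ℝ :=
  {x | x ∈ Icc (0 : ℝ) 1 ∧ a x ≤ p * g (p * x)}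

section stableSet

variable {a g : ℝ → ℝ}

lemma one_mem_stableSet (ha : a 1 ≤ 0) (hg0 : ∀ x, 0 ≤ g x) {p : ℝ} (hp : 0 ≤ p) :
    1 ∈ stableSet a g p :=
  ⟨right_mem_Icc.mpr zero_le_one, ha.trans (mul_nonneg hp (hg0 _))⟩

lemma bddBelow_stableSet (p : ℝ) : BddBelow (stableSet a g p) :=
  ⟨0, fun _ hx => hx.1.1⟩

lemma sInf_stableSet_le_one (ha : a 1 ≤ 0) (hg0 : ∀ x, 0 ≤ g x) {p : ℝ} (hp : 0 ≤ p) :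
    sInf (stableSet a g p) ≤ 1 :=
  csInf_le (bddBelow_stableSet p) (one_mem_stableSet ha hg0 hp)

lemma stableSet_mono (hg : Monotone g) (hg0 : ∀ x, 0 ≤ g x) {p p' : ℝ} (hp : 0 ≤ p)
    (hpp' : p ≤ p') : stableSet a g p ⊆ stableSet a g p' :=
  fun _ ⟨hx, hax⟩ => ⟨hx, hax.trans (mul_comp_mul_le_mul_comp_mul hg hg0 hp hpp' hx.1)⟩

lemma antitoneOn_sInf_stableSet (ha : a 1 ≤ 0) (hg : Monotone g) (hg0 : ∀ x, 0 ≤ g x) :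
    AntitoneOn (fun p => sInf (stableSet a g p)) (Ici 0) :=
  fun _ hp _ _ hpp' => csInf_le_csInf (bddBelow_stableSet _)
    ⟨1, one_mem_stableSet ha hg0 hp⟩ (stableSet_mono hg hg0 hp hpp')

end stableSet

theorem minimal_stable_allocation_antitone_general
    (V C : ℝ → ℝ) (w : ℝ) (hw : 0 < w)
    (hCdiff : Differentiable ℝ C)
    (hCconv : ConvexOn ℝ Set.univ C)
    (hCmono : Monotone C)
    (y : ℝ → ℝ)
    (hy0 : y 0 = 1)
    (hy : ∀ p > (0:ℝ), y p =
      min (w / p)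
        (sInf {x : ℝ | x ∈ Set.Icc (0:ℝ) 1 ∧
          deriv V x * (1 - x) ≤ p * deriv C (p * x)})) :
    AntitoneOn y (Set.Ici (0:ℝ)) := by
  set a : ℝ → ℝ := fun x => deriv V x * (1 - x)
  have ha : a 1 ≤ 0 := by simp [a]
  have hC'mono : Monotone (deriv C) :=
    monotoneOn_univ.mp (hCconv.monotoneOn_deriv fun x _ => hCdiff x)
  have hC'nonneg : ∀ x, 0 ≤ deriv C x := fun _ => hCmono.deriv_nonneg
  refine AntitoneOn.Ici_of_Ioi (fun p hp q hq hpq => ?_) (fun p hp => ?_)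
  · rw [hy p hp, hy q hq]
    exact min_le_min (div_le_div_of_nonneg_left hw.le hp hpq)
      (antitoneOn_sInf_stableSet ha hC'mono hC'nonneg (mem_Ici_of_Ioi hp) (mem_Ici_of_Ioi hq) hpq)
  · rw [hy p hp, hy0]
    exact (min_le_right _ _).trans (sInf_stableSet_le_one ha hC'nonneg hp.le)

/-- The minimal stable allocation function
y(p) = min{w/p, inf{x ∈ [0,1] : V'(x)(1−x) ≤ p·C'(px)}} for p > 0, y(0) = 1,
is weakly decreasing in p, for V differentiable, concave, weakly increasing
with V(0) = 0, C differentiable, convex, weakly increasing with C(0) = 0,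
and w > 0. -/
theorem minimal_stable_allocation_antitone
    (V C : ℝ → ℝ) (w : ℝ) (hw : 0 < w)
    (hVdiff : Differentiable ℝ V)
    (hVconc : ConcaveOn ℝ Set.univ V)
    (hVmono : Monotone V) (hV0 : V 0 = 0)
    (hCdiff : Differentiable ℝ C)
    (hCconv : ConvexOn ℝ Set.univ C)
    (hCmono : Monotone C) (hC0 : C 0 = 0)
    (y : ℝ → ℝ)
    (hy0 : y 0 = 1)
    (hy : ∀ p > (0:ℝ), y p =
      min (w / p)
        (sInf {x : ℝ | x ∈ Set.Icc (0:ℝ) 1 ∧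
          deriv V x * (1 - x) ≤ p * deriv C (p * x)})) :
    AntitoneOn y (Set.Ici (0:ℝ)) :=
  minimal_stable_allocation_antitone_general V C w hw hCdiff hCconv hCmono y hy0 hy
end

section
/- For two linear agents with values v1 ≥ v2 > 0 in the single-item metagame, the set P_H = {p ≥ 0 : y1(p)+y2(p) ≤ 1 and z1(p)+z2(p) ≥ 1} equals the closed interval [v1·v2/(v1+v2), v1], where y_i(p) = max(1 − p/v_i, 0) and z_i(p) = 1 if p ≤ v_i, 0 otherwise. -/
/-- For two linear agents with values v1 ≥ v2 > 0, the set of candidate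
high-price-equilibrium prices
P_H = {p ≥ 0 : y1(p)+y2(p) ≤ 1 ∧ z1(p)+z2(p) ≥ 1}, with
y_i(p) = max(1 − p/v_i, 0) and z_i(p) = 1 if p ≤ v_i else 0, is
the closed interval [v1·v2/(v1+v2), v1]. -/
theorem high_price_equilibrium_set_two_linear_agents
    (v1 v2 : ℝ) (h12 : v1 ≥ v2) (hv2 : v2 > 0) :
    {p : ℝ | 0 ≤ p ∧
        max (1 - p / v1) 0 + max (1 - p / v2) 0 ≤ 1 ∧
        (if p ≤ v1 then (1:ℝ) else 0) + (if p ≤ v2 then (1:ℝ) else 0) ≥ 1}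
      = Set.Icc (v1 * v2 / (v1 + v2)) v1 := by
  have hv1 : (0:ℝ) < v1 := lt_of_lt_of_le hv2 h12
  have hs : (0:ℝ) < v1 + v2 := by linarith
  have hthr : 0 < v1 * v2 / (v1 + v2) := by positivity
  ext p
  simp only [Set.mem_setOf_eq, Set.mem_Icc]
  constructor
  · rintro ⟨hp0, hy, hz⟩
    have hpv1 : p ≤ v1 := by
      by_contra h
      have h2 : ¬ p ≤ v2 := by push_neg at h ⊢; linarith
      rw [if_neg h, if_neg h2] at hz; linarith
    refine ⟨?_, hpv1⟩
    by_contra h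
    push_neg at h
    have hpv2 : p < v2 := by
      have : v1 * v2 / (v1 + v2) ≤ v2 := by
        rw [div_le_iff₀ hs]; nlinarith
      linarith
    have h1 : max (1 - p / v1) 0 = 1 - p / v1 := by
      apply max_eq_left
      have : p / v1 < 1 := by rw [div_lt_one hv1]; linarith
      linarith
    have h2 : max (1 - p / v2) 0 = 1 - p / v2 := by
      apply max_eq_left
      have : p / v2 < 1 := by rw [div_lt_one hv2]; linarith
      linarith
    rw [h1, h2] at hy
    have hpd : p * (v1 + v2) < v1 * v2 := by
      rw [lt_div_iff₀ hs] at h; linarith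
    have : 1 ≤ p / v1 + p / v2 := by linarith
    rw [div_add_div _ _ (ne_of_gt hv1) (ne_of_gt hv2)] at this
    rw [le_div_iff₀ (by positivity)] at this
    nlinarith
  · rintro ⟨hlo, hhi⟩
    have hp0 : 0 ≤ p := le_trans hthr.le hlo
    refine ⟨hp0, ?_, ?_⟩
    · by_cases h2 : p ≤ v2
      · have h1 : max (1 - p / v1) 0 = 1 - p / v1 := by
          apply max_eq_left
          have : p / v1 ≤ 1 := by rw [div_le_one hv1]; exact hhi
          linarith
        have h2' : max (1 - p / v2) 0 = 1 - p / v2 := by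
          apply max_eq_left
          have : p / v2 ≤ 1 := by rw [div_le_one hv2]; exact h2
          linarith
        rw [h1, h2']
        have hpd : v1 * v2 ≤ p * (v1 + v2) := by
          rw [div_le_iff₀ hs] at hlo; linarith
        have : 1 ≤ p / v1 + p / v2 := by
          rw [div_add_div _ _ (ne_of_gt hv1) (ne_of_gt hv2),
            le_div_iff₀ (by positivity)]
          nlinarith
        linarith
      · have h2' : max (1 - p / v2) 0 = 0 := by
          apply max_eq_right
          push_neg at h2
          have : 1 < p / v2 := by rw [lt_div_iff₀ hv2]; linarith
          linarith
        rw [h2']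
        have : max (1 - p / v1) 0 ≤ 1 := by
          apply max_le _ zero_le_one
          have : 0 ≤ p / v1 := by positivity
          linarith
        linarith
    · rw [if_pos hhi]
      by_cases h2 : p ≤ v2 <;> simp [h2]
end

section
/- Let C: ℝ≥0 → ℝ≥0 be convex, strictly increasing with C(0) = 0 and inverse C⁻¹. If u ≥ (1/2)·V − C(P) for reals V, P ≥ 0 with (1/2)V in the range of C + C(P), then (1/2)·C⁻¹(V) ≤ C⁻¹(u) + P. -/
/-!
Convexity together with `C 0 = 0` gives `C (x / 2) ≤ C x / 2` and the superadditivity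
`C a + C b ≤ C (a + b)`. Transported through the monotone inverse, the first yields
`C⁻¹ V / 2 ≤ C⁻¹ (V / 2)` and the second `C⁻¹ (u + C P) ≤ C⁻¹ u + P`; the hypothesis on `u`
links the two.
-/

open Set

namespace ConvexOn

variable {C : ℝ → ℝ}

theorem map_mul_le_mul_of_map_zero (hC : ConvexOn ℝ (Ici 0) C) (hC0 : C 0 = 0)
    {t x : ℝ} (ht0 : 0 ≤ t) (ht1 : t ≤ 1) (hx : 0 ≤ x) : C (t * x) ≤ t * C x := by
  have h := hC.2 (mem_Ici.mpr hx) (mem_Ici.mpr le_rfl) ht0 (sub_nonneg.mpr ht1)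
    (add_sub_cancel t 1)
  simpa only [smul_eq_mul, mul_zero, add_zero, hC0] using h

theorem add_le_map_add_of_map_zero (hC : ConvexOn ℝ (Ici 0) C) (hC0 : C 0 = 0)
    {a b : ℝ} (ha : 0 ≤ a) (hb : 0 ≤ b) : C a + C b ≤ C (a + b) := by
  rcases (add_nonneg ha hb).eq_or_lt with hs | hs
  · obtain ⟨rfl, rfl⟩ : a = 0 ∧ b = 0 := ⟨by linarith, by linarith⟩
    simp [hC0]
  have hshare {c : ℝ} (hc : 0 ≤ c) (hcs : c ≤ a + b) : C c ≤ c / (a + b) * C (a + b) := by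
    have h := hC.map_mul_le_mul_of_map_zero hC0 (div_nonneg hc hs.le)
      ((div_le_one hs).mpr hcs) hs.le
    rwa [div_mul_cancel₀ c hs.ne'] at h
  calc C a + C b ≤ a / (a + b) * C (a + b) + b / (a + b) * C (a + b) :=
        add_le_add (hshare ha (by linarith)) (hshare hb (by linarith))
    _ = C (a + b) := by field_simp

end ConvexOn

theorem StrictMonoOn.monotoneOn_of_leftInvOn {C Cinv : ℝ → ℝ} {s : Set ℝ}
    (hC : StrictMonoOn C s) (hinv : LeftInvOn Cinv C s) : MonotoneOn Cinv (C '' s) := by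
  rintro _ ⟨a, ha, rfl⟩ _ ⟨b, hb, rfl⟩ hab
  rw [hinv ha, hinv hb]
  exact (hC.le_iff_le ha hb).mp hab

/-- If C is convex, strictly increasing with C(0) = 0 and surjective onto
ℝ≥0, with inverse C⁻¹, and u ≥ (1/2)·V − C(P) with u, V, P ≥ 0, then
(1/2)·C⁻¹(V) ≤ C⁻¹(u) + P. -/
theorem half_inverse_value_bound
    (C Cinv : ℝ → ℝ)
    (hCconv : ConvexOn ℝ (Set.Ici (0:ℝ)) C)
    (hCmono : StrictMonoOn C (Set.Ici (0:ℝ)))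
    (hC0 : C 0 = 0)
    (hCsurj : ∀ y : ℝ, 0 ≤ y → ∃ x : ℝ, 0 ≤ x ∧ C x = y)
    (hinv : ∀ x ∈ Set.Ici (0:ℝ), Cinv (C x) = x)
    (u V P : ℝ) (hu : 0 ≤ u) (hV : 0 ≤ V) (hP : 0 ≤ P)
    (hbound : (1:ℝ)/2 * V - C P ≤ u) :
    (1:ℝ)/2 * Cinv V ≤ Cinv u + P := by
  have hCinv : MonotoneOn Cinv (C '' Ici 0) := hCmono.monotoneOn_of_leftInvOn hinv
  have hC_nonneg {x : ℝ} (hx : 0 ≤ x) : 0 ≤ C x := hC0 ▸ hCmono.monotoneOn self_mem_Ici hx hx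
  have hrange {y : ℝ} (hy : 0 ≤ y) : y ∈ C '' Ici 0 := hCsurj y hy
  obtain ⟨x, hx, rfl⟩ := hCsurj V hV
  obtain ⟨a, ha, rfl⟩ := hCsurj u hu
  have hhalf : C (1 / 2 * x) ≤ 1 / 2 * C x :=
    hCconv.map_mul_le_mul_of_map_zero hC0 (by norm_num) (by norm_num) hx
  have hsuper : C a + C P ≤ C (a + P) := hCconv.add_le_map_add_of_map_zero hC0 ha hP
  have hxa : 0 ≤ 1 / 2 * x := by positivity
  have haP : 0 ≤ a + P := add_nonneg ha hP
  calc 1 / 2 * Cinv (C x) = Cinv (C (1 / 2 * x)) := by rw [hinv x hx, hinv _ hxa]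
    _ ≤ Cinv (C (a + P)) :=
        hCinv (hrange (hC_nonneg hxa)) (hrange (hC_nonneg haP)) (by linarith)
    _ = Cinv (C a) + P := by rw [hinv _ haP, hinv a ha]
end
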